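/- Let (H, σ) be a Long bialgebra and (M, ρ) a right H-comodule. Define h · m := ∑ σ(m₍₁₎ ⊗ h) m₍₀₎ for h ∈ H, m ∈ M. Then this action makes M a left H-module (i.e. 1 · m = m and (gh) · m = g · (h · m) for all g, h ∈ H, m ∈ M), and the dimodule compatibility condition ρ(h · m) = ∑ (h · m₍₀₎) ⊗ m₍₁₎ holds for all h ∈ H and m ∈ M. -/

import Mathlib

/-!
A right `C`-comodule `M` is a left module over the convolution algebra `C* = Hom(C, k)` via
`f ⇀ m = ∑ f(m₍₁₎) m₍₀₎`, and coassociativity gives `ρ(f ⇀ m) = ∑ m₍₀₎ ⊗ (f ⇀ m₍₁₎)` and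
`∑ (f ⇀ m₍₀₎) ⊗ m₍₁₎ = ∑ m₍₀₎ ⊗ (m₍₁₎ ↼ f)`, where `c ↼ f = ∑ f(c₍₁₎) c₍₂₎`.
For a Long bialgebra, (L2) and (L3) say that `h ↦ σ(- ⊗ h)` is a monoid map `H → H*`, so the
action `h · m` is the pullback of the `H*`-action; and (L1) says exactly that `f ⇀ c = c ↼ f`
for `f = σ(- ⊗ h)`, which turns the two coassociativity identities into the dimodule condition.
-/

open TensorProduct

noncomputable section

variable (k : Type*) [Field k] (H : Type*) [Ring H] [Algebra k H]

/-- Condition (L1) for a comultiplication Δ and a bilinear map σ: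
∑ σ(x₍₁₎ ⊗ y) x₍₂₎ = ∑ σ(x₍₂₎ ⊗ y) x₍₁₎, as an equality of linear maps H ⊗ H → H. -/
def CondL1 (Δ : H →ₗ[k] H ⊗[k] H) (σ : H ⊗[k] H →ₗ[k] k) : Prop :=
  (TensorProduct.rid k H).toLinearMap ∘ₗ
      TensorProduct.map LinearMap.id σ ∘ₗ
      (TensorProduct.assoc k H H H).toLinearMap ∘ₗ
      TensorProduct.map ((TensorProduct.comm k H H).toLinearMap ∘ₗ Δ) LinearMap.id =
    (TensorProduct.rid k H).toLinearMap ∘ₗ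
      TensorProduct.map LinearMap.id σ ∘ₗ
      (TensorProduct.assoc k H H H).toLinearMap ∘ₗ
      TensorProduct.map Δ LinearMap.id

/-- Condition (L2): σ(x ⊗ 1) = ε(x). -/
def CondL2 (ε : H →ₗ[k] k) (σ : H ⊗[k] H →ₗ[k] k) : Prop :=
  ∀ x : H, σ (x ⊗ₜ[k] (1 : H)) = ε x

/-- Condition (L3): σ(x ⊗ yz) = ∑ σ(x₍₁₎ ⊗ y) σ(x₍₂₎ ⊗ z),
as an equality of linear maps H ⊗ (H ⊗ H) → k. -/
def CondL3 (Δ : H →ₗ[k] H ⊗[k] H) (σ : H ⊗[k] H →ₗ[k] k) : Prop :=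
  σ ∘ₗ TensorProduct.map LinearMap.id (LinearMap.mul' k H) =
    (TensorProduct.lid k k).toLinearMap ∘ₗ
      TensorProduct.map σ σ ∘ₗ
      (TensorProduct.tensorTensorTensorComm k H H H H).toLinearMap ∘ₗ
      TensorProduct.map Δ LinearMap.id

/-- Condition (L4): σ(1 ⊗ x) = ε(x). -/
def CondL4 (ε : H →ₗ[k] k) (σ : H ⊗[k] H →ₗ[k] k) : Prop :=
  ∀ x : H, σ ((1 : H) ⊗ₜ[k] x) = ε x

/-- Condition (L5): σ(xy ⊗ z) = ∑ σ(y ⊗ z₍₁₎) σ(x ⊗ z₍₂₎),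
as an equality of linear maps (H ⊗ H) ⊗ H → k. -/
def CondL5 (Δ : H →ₗ[k] H ⊗[k] H) (σ : H ⊗[k] H →ₗ[k] k) : Prop :=
  σ ∘ₗ TensorProduct.map (LinearMap.mul' k H) LinearMap.id =
    (TensorProduct.lid k k).toLinearMap ∘ₗ
      TensorProduct.map σ σ ∘ₗ
      (TensorProduct.tensorTensorTensorComm k H H H H).toLinearMap ∘ₗ
      TensorProduct.map LinearMap.id Δ ∘ₗ
      TensorProduct.map (TensorProduct.comm k H H).toLinearMap LinearMap.id

/-- (H, σ) is a Long bialgebra (relative to comultiplication Δ and counit ε):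
conditions (L1)–(L5) hold. -/
def IsLongBialgebra (Δ : H →ₗ[k] H ⊗[k] H) (ε : H →ₗ[k] k)
    (σ : H ⊗[k] H →ₗ[k] k) : Prop :=
  CondL1 k H Δ σ ∧ CondL2 k H ε σ ∧ CondL3 k H Δ σ ∧ CondL4 k H ε σ ∧ CondL5 k H Δ σ

end

noncomputable section

variable {k : Type*} [Field k] {H : Type*} [Ring H] [Bialgebra k H]
variable {M : Type*} [AddCommGroup M] [Module k M]

/-- Coassociativity of a right comodule structure map ρ : M → M ⊗ H. -/
def IsCoassoc (ρ : M →ₗ[k] M ⊗[k] H) : Prop :=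
  TensorProduct.map LinearMap.id (Coalgebra.comul : H →ₗ[k] H ⊗[k] H) ∘ₗ ρ =
    (TensorProduct.assoc k M H H).toLinearMap ∘ₗ TensorProduct.map ρ LinearMap.id ∘ₗ ρ

/-- Counitality of a right comodule structure map ρ : M → M ⊗ H. -/
def IsCounital (ρ : M →ₗ[k] M ⊗[k] H) : Prop :=
  (TensorProduct.rid k M).toLinearMap ∘ₗ
      TensorProduct.map LinearMap.id (Coalgebra.counit : H →ₗ[k] k) ∘ₗ ρ =
    LinearMap.id

/-- The induced action h · m = ∑ σ(m₍₁₎ ⊗ h) m₍₀₎. -/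
def act (σ : H ⊗[k] H →ₗ[k] k) (ρ : M →ₗ[k] M ⊗[k] H) (h : H) : M →ₗ[k] M :=
  (TensorProduct.rid k M).toLinearMap ∘ₗ
    TensorProduct.map LinearMap.id (σ ∘ₗ (TensorProduct.mk k H H).flip h) ∘ₗ ρ

end

open WithConv

namespace Comodule

variable {R C M : Type*} [CommSemiring R] [AddCommMonoid C] [Module R C]
  [AddCommMonoid M] [Module R M]

def convAct (ρ : M →ₗ[R] M ⊗[R] C) (f : WithConv (C →ₗ[R] R)) : M →ₗ[R] M :=
  (TensorProduct.rid R M).toLinearMap ∘ₗ f.ofConv.lTensor M ∘ₗ ρ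

section CoalgebraStruct

variable [CoalgebraStruct R C]

def convActRight (f : WithConv (C →ₗ[R] R)) : C →ₗ[R] C :=
  (TensorProduct.lid R C).toLinearMap ∘ₗ f.ofConv.rTensor C ∘ₗ Coalgebra.comul

theorem ofConv_comp_convAct_comul (f g : WithConv (C →ₗ[R] R)) :
    f.ofConv ∘ₗ convAct Coalgebra.comul g = (f * g).ofConv := by
  have contract : f.ofConv ∘ₗ (TensorProduct.rid R C).toLinearMap ∘ₗ g.ofConv.lTensor C =
      LinearMap.mul' R R ∘ₗ TensorProduct.map f.ofConv g.ofConv := by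
    ext; simp [mul_comm]
  exact congrArg (· ∘ₗ Coalgebra.comul) contract

variable {ρ : M →ₗ[R] M ⊗[R] C}
  (hρ : Coalgebra.comul.lTensor M ∘ₗ ρ =
    (TensorProduct.assoc R M C C).toLinearMap ∘ₗ ρ.rTensor C ∘ₗ ρ)
include hρ

theorem rTensor_apply_eq_assoc_symm (m : M) :
    ρ.rTensor C (ρ m) = (TensorProduct.assoc R M C C).symm (Coalgebra.comul.lTensor M (ρ m)) :=
  (LinearEquiv.eq_symm_apply _).2 (LinearMap.congr_fun hρ m).symm

theorem comp_convAct (f : WithConv (C →ₗ[R] R)) :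
    ρ ∘ₗ convAct ρ f = (convAct Coalgebra.comul f).lTensor M ∘ₗ ρ := by
  have natural : ρ ∘ₗ (TensorProduct.rid R M).toLinearMap ∘ₗ f.ofConv.lTensor M =
      (TensorProduct.rid R (M ⊗[R] C)).toLinearMap ∘ₗ f.ofConv.lTensor (M ⊗[R] C) ∘ₗ
        ρ.rTensor C := by
    ext; simp
  have reassoc : (TensorProduct.rid R (M ⊗[R] C)).toLinearMap ∘ₗ
      f.ofConv.lTensor (M ⊗[R] C) ∘ₗ (TensorProduct.assoc R M C C).symm.toLinearMap =
      ((TensorProduct.rid R C).toLinearMap ∘ₗ f.ofConv.lTensor C).lTensor M := by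
    ext; simp
  ext m
  calc ρ (convAct ρ f m)
      = TensorProduct.rid R (M ⊗[R] C) (f.ofConv.lTensor (M ⊗[R] C) (ρ.rTensor C (ρ m))) :=
        LinearMap.congr_fun natural (ρ m)
    _ = (convAct Coalgebra.comul f).lTensor M (ρ m) := by
        rw [rTensor_apply_eq_assoc_symm hρ, convAct, ← LinearMap.comp_assoc,
          LinearMap.lTensor_comp_apply]
        exact LinearMap.congr_fun reassoc _

theorem convAct_mul (f g : WithConv (C →ₗ[R] R)) :
    convAct ρ (f * g) = convAct ρ f ∘ₗ convAct ρ g := by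
  calc convAct ρ (f * g)
      = (TensorProduct.rid R M).toLinearMap ∘ₗ f.ofConv.lTensor M ∘ₗ
          (convAct Coalgebra.comul g).lTensor M ∘ₗ ρ := by
        rw [convAct, ← ofConv_comp_convAct_comul, LinearMap.lTensor_comp]
        rfl
    _ = convAct ρ f ∘ₗ convAct ρ g := by
        rw [← comp_convAct hρ]
        rfl

theorem rTensor_convAct_comp (f : WithConv (C →ₗ[R] R)) :
    (convAct ρ f).rTensor C ∘ₗ ρ = (convActRight f).lTensor M ∘ₗ ρ := by
  have reassoc : ((TensorProduct.rid R M).toLinearMap ∘ₗ f.ofConv.lTensor M).rTensor C ∘ₗ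
      (TensorProduct.assoc R M C C).symm.toLinearMap =
      ((TensorProduct.lid R C).toLinearMap ∘ₗ f.ofConv.rTensor C).lTensor M := by
    ext; simp [TensorProduct.smul_tmul']
  ext m
  calc (convAct ρ f).rTensor C (ρ m)
      = ((TensorProduct.rid R M).toLinearMap ∘ₗ f.ofConv.lTensor M).rTensor C
          (ρ.rTensor C (ρ m)) := by
        rw [convAct, ← LinearMap.comp_assoc, LinearMap.rTensor_comp_apply]
    _ = (convActRight f).lTensor M (ρ m) := by
        rw [rTensor_apply_eq_assoc_symm hρ, convActRight, ← LinearMap.comp_assoc,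
          LinearMap.lTensor_comp_apply]
        exact LinearMap.congr_fun reassoc _

end CoalgebraStruct

theorem convAct_one [Coalgebra R C] {ρ : M →ₗ[R] M ⊗[R] C}
    (hρ : (TensorProduct.rid R M).toLinearMap ∘ₗ Coalgebra.counit.lTensor M ∘ₗ ρ =
      LinearMap.id) :
    convAct ρ 1 = LinearMap.id :=
  hρ

end Comodule

namespace LongBialgebra

section Pairing

variable {R M N P : Type*} [CommSemiring R] [AddCommMonoid M] [Module R M]
  [AddCommMonoid N] [Module R N] [AddCommMonoid P] [Module R P]

def pairingRight (σ : M ⊗[R] N →ₗ[R] R) (h : N) : WithConv (M →ₗ[R] R) :=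
  toConv (σ ∘ₗ (TensorProduct.mk R M N).flip h)

theorem rid_lTensor_assoc_tmul (σ : N ⊗[R] P →ₗ[R] R) (t : M ⊗[R] N) (p : P) :
    TensorProduct.rid R M (σ.lTensor M (TensorProduct.assoc R M N P (t ⊗ₜ p))) =
      TensorProduct.rid R M ((pairingRight σ p).ofConv.lTensor M t) := by
  induction t using TensorProduct.induction_on with
  | zero => simp
  | tmul m n => simp [pairingRight]
  | add t t' ht ht' => simp only [TensorProduct.add_tmul, map_add, ht, ht']

theorem lid_map_tensorTensorTensorComm_tmul (σ τ : M ⊗[R] N →ₗ[R] R) (t : M ⊗[R] M)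
    (p q : N) :
    TensorProduct.lid R R (TensorProduct.map σ τ
        (TensorProduct.tensorTensorTensorComm R M M N N (t ⊗ₜ (p ⊗ₜ q)))) =
      LinearMap.mul' R R
        (TensorProduct.map (pairingRight σ p).ofConv (pairingRight τ q).ofConv t) := by
  induction t using TensorProduct.induction_on with
  | zero => simp
  | tmul m n => simp [pairingRight]
  | add t t' ht ht' => simp only [TensorProduct.add_tmul, map_add, ht, ht']

end Pairing

variable {k : Type*} [Field k] {H : Type*} [Ring H] [Bialgebra k H] {σ : H ⊗[k] H →ₗ[k] k}

theorem pairingRight_one (hL2 : CondL2 k H Coalgebra.counit σ) : pairingRight σ 1 = 1 := by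
  ext x
  simp [pairingRight, hL2 x]

theorem pairingRight_mul (hL3 : CondL3 k H Coalgebra.comul σ) (g h : H) :
    pairingRight σ (g * h) = pairingRight σ g * pairingRight σ h := by
  ext x
  have hx := LinearMap.congr_fun hL3 (x ⊗ₜ (g ⊗ₜ h))
  simp only [LinearMap.comp_apply, TensorProduct.map_tmul, LinearMap.mul'_apply,
    LinearEquiv.coe_coe, LinearMap.id_apply, lid_map_tensorTensorTensorComm_tmul] at hx
  exact hx

theorem convAct_comul_pairingRight (hL1 : CondL1 k H Coalgebra.comul σ) (h : H) :
    Comodule.convAct Coalgebra.comul (pairingRight σ h) =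
      Comodule.convActRight (pairingRight σ h) := by
  have swap : (TensorProduct.rid k H).toLinearMap ∘ₗ (pairingRight σ h).ofConv.lTensor H ∘ₗ
      (TensorProduct.comm k H H).toLinearMap =
      (TensorProduct.lid k H).toLinearMap ∘ₗ (pairingRight σ h).ofConv.rTensor H := by
    ext; simp
  ext x
  have hx := LinearMap.congr_fun hL1 (x ⊗ₜ h)
  simp only [LinearMap.comp_apply, TensorProduct.map_tmul, LinearEquiv.coe_coe,
    LinearMap.id_apply, ← LinearMap.lTensor_def, rid_lTensor_assoc_tmul] at hx
  exact hx.symm.trans (LinearMap.congr_fun swap _)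

end LongBialgebra

open Comodule LongBialgebra

theorem comodule_over_long_bialgebra_is_dimodule
    {k : Type*} [Field k] {H : Type*} [Ring H] [Bialgebra k H]
    {M : Type*} [AddCommGroup M] [Module k M]
    (σ : H ⊗[k] H →ₗ[k] k)
    (hLong : IsLongBialgebra k H (Coalgebra.comul : H →ₗ[k] H ⊗[k] H)
      (Coalgebra.counit : H →ₗ[k] k) σ)
    (ρ : M →ₗ[k] M ⊗[k] H) (hcoassoc : IsCoassoc ρ) (hcounit : IsCounital ρ) :
    (∀ m : M, act σ ρ (1 : H) m = m) ∧
    (∀ (g h : H) (m : M), act σ ρ (g * h) m = act σ ρ g (act σ ρ h m)) ∧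
    (∀ h : H, ρ ∘ₗ act σ ρ h = TensorProduct.map (act σ ρ h) LinearMap.id ∘ₗ ρ) := by
  obtain ⟨hL1, hL2, hL3, -, -⟩ := hLong
  have act_eq (h : H) : act σ ρ h = convAct ρ (pairingRight σ h) := rfl
  refine ⟨fun m => ?_, fun g h m => ?_, fun h => ?_⟩
  · rw [act_eq, pairingRight_one hL2, convAct_one hcounit, LinearMap.id_apply]
  · rw [act_eq, act_eq, act_eq, pairingRight_mul hL3, convAct_mul hcoassoc,
      LinearMap.comp_apply]
  · rw [act_eq, comp_convAct hcoassoc, convAct_comul_pairingRight hL1,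
      ← rTensor_convAct_comp hcoassoc]
    rfl
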